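/- For n ≥ 2, ζ = 2π/n, α ≥ 1: define s_k = 2^{-α} Σ_{j=1}^{n-1} sin²(kjζ/2)/sin^{α+1}(jζ/2) and s̄_k the same sum with α replaced by α - 2. Then s_{k+1} - s_k = (2k+1)s₁ - Σ_{h=1}^k s̄_h for all integers k ≥ 0. -/
import Mathlib


open Finset

lemma trig_key (x : ℝ) (k : ℕ) :
    Real.sin (((k:ℝ)+1)*x)^2 - Real.sin ((k:ℝ)*x)^2
      = (2*k+1)*Real.sin x^2
        - 4 * Real.sin x^2 * ∑ h ∈ Finset.Icc 1 k, Real.sin ((h:ℝ)*x)^2 := by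
  induction k with
  | zero => simp
  | succ k ih =>
    rw [Finset.sum_Icc_succ_top (by omega)]
    push_cast
    have h1 : Real.sin (((k:ℝ)+1+1)*x)
        = Real.sin (((k:ℝ)+1)*x) * Real.cos x + Real.cos (((k:ℝ)+1)*x) * Real.sin x := by
      rw [← Real.sin_add]; ring_nf
    have h2 : Real.sin ((k:ℝ)*x)
        = Real.sin (((k:ℝ)+1)*x) * Real.cos x - Real.cos (((k:ℝ)+1)*x) * Real.sin x := by
      rw [← Real.sin_sub]; ring_nf
    have hpy := Real.sin_sq_add_cos_sq x
    have hpy2 := Real.sin_sq_add_cos_sq (((k:ℝ)+1)*x)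
    rw [h1]
    rw [h2] at ih
    nlinarith [ih, hpy, hpy2]

lemma per_j (α : ℝ) (x : ℝ) (hx : 0 < Real.sin x) (k : ℕ) :
    Real.sin (((k:ℝ)+1)*x)^2 / Real.sin x ^ (α+1)
      - Real.sin ((k:ℝ)*x)^2 / Real.sin x ^ (α+1)
    = (2*k+1) * (Real.sin x^2 / Real.sin x ^ (α+1))
      - 4 * ∑ h ∈ Finset.Icc 1 k, Real.sin ((h:ℝ)*x)^2 / Real.sin x ^ ((α-2)+1) := by
  have ht : Real.sin x ^ (α+1) = Real.sin x ^ ((α-2)+1) * Real.sin x ^ 2 := by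
    rw [← Real.rpow_natCast (Real.sin x) 2, ← Real.rpow_add hx]
    ring_nf
  have hT : Real.sin x ^ (α+1) ≠ 0 := by positivity
  have hT2 : Real.sin x ^ ((α-2)+1) ≠ 0 := by positivity
  have hterm : ∀ h : ℕ, Real.sin ((h:ℝ)*x)^2 / Real.sin x ^ ((α-2)+1)
      = Real.sin ((h:ℝ)*x)^2 * Real.sin x ^ 2 / Real.sin x ^ (α+1) := by
    intro h
    rw [ht, mul_div_mul_right _ _ (by positivity : (Real.sin x ^ 2 : ℝ) ≠ 0)]
  simp only [hterm]
  rw [div_sub_div_same, trig_key]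
  rw [← Finset.sum_div, ← Finset.sum_mul]
  ring

/-- The sum `s_k = 2^{-α} Σ_{j=1}^{n-1} sin²(kjζ/2)/sin^{α+1}(jζ/2)` with `ζ = 2π/n`. -/
noncomputable def sSum (n : ℕ) (α : ℝ) (k : ℕ) : ℝ :=
  2 ^ (-α) * ∑ j ∈ Finset.Icc 1 (n - 1),
    Real.sin (k * j * (2 * Real.pi / n) / 2) ^ 2 /
      Real.sin (j * (2 * Real.pi / n) / 2) ^ (α + 1)

theorem stmt8 (n : ℕ) (hn : 2 ≤ n) (α : ℝ) (hα : 1 ≤ α) (k : ℕ) :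
    sSum n α (k + 1) - sSum n α k
      = (2 * k + 1) * sSum n α 1 - ∑ h ∈ Finset.Icc 1 k, sSum n (α - 2) h := by
  have hπ := Real.pi_pos
  have hn0 : (0:ℝ) < n := by positivity
  have hx : ∀ j ∈ Finset.Icc 1 (n-1), 0 < Real.sin ((j:ℝ)*(2*Real.pi/n)/2) := by
    intro j hj
    simp only [Finset.mem_Icc] at hj
    have hj1 : (1:ℝ) ≤ (j:ℝ) := by exact_mod_cast hj.1
    have hjn : (j:ℝ) < n := by
      have : j < n := by omega
      exact_mod_cast this
    have e : (j:ℝ)*(2*Real.pi/n)/2 = j*Real.pi/n := by ring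
    rw [e]
    apply Real.sin_pos_of_pos_of_lt_pi
    · positivity
    · rw [div_lt_iff₀ hn0]
      nlinarith
  have key : ∀ j ∈ Finset.Icc 1 (n-1),
      Real.sin ((((k+1):ℕ):ℝ) * j * (2*Real.pi/n)/2)^2 / Real.sin ((j:ℝ)*(2*Real.pi/n)/2) ^ (α+1)
        - Real.sin ((k:ℝ) * j * (2*Real.pi/n)/2)^2 / Real.sin ((j:ℝ)*(2*Real.pi/n)/2) ^ (α+1)
      = (2*(k:ℝ)+1) * (Real.sin (((1:ℕ):ℝ) * j * (2*Real.pi/n)/2)^2 / Real.sin ((j:ℝ)*(2*Real.pi/n)/2) ^ (α+1))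
        - 4 * ∑ h ∈ Finset.Icc 1 k,
            Real.sin ((h:ℝ) * j * (2*Real.pi/n)/2)^2 / Real.sin ((j:ℝ)*(2*Real.pi/n)/2) ^ ((α-2)+1) := by
    intro j hj
    have := per_j α ((j:ℝ)*(2*Real.pi/n)/2) (hx j hj) k
    have e1 : (((k+1):ℕ):ℝ) * j * (2*Real.pi/n)/2 = ((k:ℝ)+1) * ((j:ℝ)*(2*Real.pi/n)/2) := by
      push_cast; ring
    have e2 : (k:ℝ) * j * (2*Real.pi/n)/2 = (k:ℝ) * ((j:ℝ)*(2*Real.pi/n)/2) := by ring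
    have e3 : (((1:ℕ)):ℝ) * j * (2*Real.pi/n)/2 = (j:ℝ)*(2*Real.pi/n)/2 := by push_cast; ring
    rw [e1, e2, e3]
    rw [this]
    congr 1
    congr 1
    apply Finset.sum_congr rfl
    intro h _
    congr 3
    ring
  -- now assemble
  have h24 : (2:ℝ)^(-(α-2)) = 2^(-α)*4 := by
    rw [show -(α-2) = -α + 2 by ring, Real.rpow_add (by norm_num : (0:ℝ)<2)]
    norm_num
  simp only [sSum, h24]
  rw [← mul_sub, ← Finset.sum_sub_distrib, Finset.sum_congr rfl key,
    Finset.sum_sub_distrib, ← Finset.mul_sum, ← Finset.mul_sum, Finset.sum_comm]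
  simp only [← Finset.mul_sum]
  ring
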